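/- Let I ⊂ ℝ, 0 < p < 1, and suppose (φ_n(λ)) satisfies the expansion φ_n(λ) = Σ_{k=0}^{M} ψ_k(λ)n^{-s_k} + õ_I(n^{-p-1}) with p = s₀ < s_k ≤ p+1, ψ₀ uniformly positive and bounded on I, and ψ_k bounded on I for k ≥ 1. Then for any real constants A⁺ < p/2 < A⁻ there exists N ∈ ℕ such that the sequences v_n^±(λ) := ±φ_n(λ) + A^± n^{-1} satisfy v_n^±(λ)·(1 + v_{n-1}^±(λ)) ≤ v_{n-1}^±(λ) + φ_n(λ)² for all n > N and all λ ∈ I. -/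

import Mathlib

/-- `r_n(λ) = õ_I(h_n)`: the remainder is uniformly little-o of `h_n` on `I`. -/
def LittleOI (I : Set ℝ) (r : ℕ → ℝ → ℝ) (h : ℕ → ℝ) : Prop :=
  ∀ ε > (0 : ℝ), ∃ N : ℕ, ∀ n > N, ∀ t ∈ I, |r n t| ≤ ε * |h n|

/-!
Write `v_n = σ φ_n + A/n` with `σ = ±1`. Since `1/n - 1/(n-1) = -1/(n(n-1))`, the defect
`v_n (1 + v_{n-1}) - v_{n-1} - φ_n²` equals
`σ D - φ_n D + σ A (φ_n/(n-1) + φ_{n-1}/n) + (A² - A)/(n(n-1))` with `D = φ_n - φ_{n-1}`.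
The expansion gives `φ_n = ψ₀ n^(-p) + õ(n^(-p))` and, because
`n^(-s) - (n-1)^(-s) = -s n^(-s-1) + o(n^(-s-1))`, also `D = -p ψ₀ n^(-p-1) + õ(n^(-p-1))`.
For `0 < p < 1` every other contribution is `õ(n^(-p-1))`, so the defect is
`σ (2A - p) ψ₀ n^(-p-1) + õ(n^(-p-1))`, which is eventually `≤ 0` as soon as `σ (2A - p) < 0`.
Uniformity in `λ ∈ I` is little-o along the filter `atTop ×ˢ 𝓟 I` on `ℕ × ℝ`.
-/

open Filter Asymptotics Topology

theorem isLittleO_natCast_rpow_of_lt {a b : ℝ} (h : b < a) :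
    (fun n : ℕ => (n : ℝ) ^ b) =o[atTop] fun n => (n : ℝ) ^ a := by
  have hreal : (fun x : ℝ => x ^ b) =o[atTop] fun x => x ^ a := by
    refine (((isLittleO_one_iff ℝ).2 (tendsto_rpow_neg_atTop (sub_pos.2 h))).mul_isBigO
      (isBigO_refl (fun x : ℝ => x ^ a) atTop)).congr' ?_ (.of_forall fun _ => one_mul _)
    filter_upwards [eventually_gt_atTop 0] with x hx
    rw [← Real.rpow_add hx]
    ring_nf
  exact hreal.comp_tendsto tendsto_natCast_atTop_atTop

theorem isLittleO_natCast_rpow_sub_rpow_pred (s : ℝ) :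
    (fun n : ℕ => (n : ℝ) ^ (-s) - ((n : ℝ) - 1) ^ (-s) + s * ((n : ℝ) ^ (-s) * (n : ℝ)⁻¹))
      =o[atTop] fun n => (n : ℝ) ^ (-s) * (n : ℝ)⁻¹ := by
  -- `(n - 1)^(-s) = n^(-s) (1 - 1/n)^(-s)`, and `h ↦ (1 - h)^(-s)` has derivative `s` at `0`
  have hderiv : HasDerivAt (fun h : ℝ => (1 - h) ^ (-s)) s 0 := by
    convert ((hasDerivAt_id' (0 : ℝ)).const_sub 1).rpow_const (p := -s) (Or.inl (by norm_num))
      using 1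
    norm_num
  have htaylor := hderiv.isLittleO.comp_tendsto tendsto_inv_atTop_nhds_zero_nat
  refine ((isBigO_refl (fun n : ℕ => (n : ℝ) ^ (-s)) atTop).mul_isLittleO
    htaylor).neg_left.congr' ?_ ?_
  · filter_upwards [eventually_ge_atTop 1] with n hn
    have hn : (1 : ℝ) ≤ n := by exact_mod_cast hn
    have hpred : ((n : ℝ) - 1) ^ (-s) = (n : ℝ) ^ (-s) * (1 - (n : ℝ)⁻¹) ^ (-s) := by
      rw [← Real.mul_rpow (by linarith) (sub_nonneg.2 (inv_le_one_of_one_le₀ hn))]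
      congr 1
      field_simp
    simp only [Function.comp_apply, sub_zero, smul_eq_mul, Real.one_rpow, hpred]
    ring
  · exact .of_forall fun _ => by simp only [Function.comp_apply, sub_zero]

theorem isBigO_natCast_rpow_sub_rpow_pred (s : ℝ) :
    (fun n : ℕ => (n : ℝ) ^ (-s) - ((n : ℝ) - 1) ^ (-s))
      =O[atTop] fun n => (n : ℝ) ^ (-s) * (n : ℝ)⁻¹ :=
  ((isLittleO_natCast_rpow_sub_rpow_pred s).isBigO.sub
    ((isBigO_refl _ _).const_mul_left s)).congr_left fun n => by ring

theorem isBigO_natCast_pred_rpow (s : ℝ) :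
    (fun n : ℕ => ((n : ℝ) - 1) ^ (-s)) =O[atTop] fun n => (n : ℝ) ^ (-s) := by
  have hinv : (fun n : ℕ => (n : ℝ)⁻¹) =O[atTop] fun _ => (1 : ℝ) :=
    ((isLittleO_one_iff ℝ).2 tendsto_inv_atTop_nhds_zero_nat).isBigO
  have := (isBigO_natCast_rpow_sub_rpow_pred s).trans
    (((isBigO_refl (fun n : ℕ => (n : ℝ) ^ (-s)) atTop).mul hinv).congr_right fun n => mul_one _)
  exact ((isBigO_refl _ _).sub this).congr_left fun n => by ring

section Uniform

variable {I : Set ℝ}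

theorem eventually_atTop_prod_principal_iff {P : ℕ × ℝ → Prop} :
    (∀ᶠ x in atTop ×ˢ 𝓟 I, P x) ↔ ∃ N : ℕ, ∀ n > N, ∀ t ∈ I, P (n, t) := by
  rw [eventually_prod_principal_iff, eventually_atTop]
  exact ⟨fun ⟨N, hN⟩ => ⟨N, fun n hn => hN n hn.le⟩,
    fun ⟨N, hN⟩ => ⟨N + 1, fun n hn => hN n hn⟩⟩

theorem LittleOI.isLittleO {r : ℕ → ℝ → ℝ} {h : ℕ → ℝ} (hr : LittleOI I r h) :
    (fun x : ℕ × ℝ => r x.1 x.2) =o[atTop ×ˢ 𝓟 I] fun x => h x.1 :=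
  IsLittleO.of_bound fun _ hε => eventually_atTop_prod_principal_iff.2 (hr _ hε)

theorem isBigO_one_of_bounded_on {f : ℝ → ℝ} (hf : ∃ C, ∀ t ∈ I, |f t| ≤ C) :
    (fun x : ℕ × ℝ => f x.2) =O[atTop ×ˢ 𝓟 I] fun _ => (1 : ℝ) := by
  obtain ⟨C, hC⟩ := hf
  refine IsBigO.of_bound C (eventually_prod_principal_iff.2 (.of_forall fun _ t ht => ?_))
  simpa using hC t ht

theorem Asymptotics.IsLittleO.bounded_on_mul {f : ℝ → ℝ} {u g : ℕ → ℝ}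
    (hf : ∃ C, ∀ t ∈ I, |f t| ≤ C) (hu : u =o[atTop] g) :
    (fun x : ℕ × ℝ => f x.2 * u x.1) =o[atTop ×ˢ 𝓟 I] fun x => g x.1 := by
  simpa only [one_mul, Function.comp_def] using
    (isBigO_one_of_bounded_on hf).mul_isLittleO (hu.comp_fst (l' := 𝓟 I))

end Uniform

section Defect

variable {α : Type*} {l : Filter α}

-- Applied with `u = φ_n`, `w = φ_{n-1}`, `g = ψ₀`, `a = n^(-p)`, `x = 1/n`, `y = 1/(n-1)`.
theorem isLittleO_minorant_defect {u w g a x y : α → ℝ} {p σ A : ℝ} (hσ : σ ^ 2 = 1)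
    (hxy : ∀ᶠ z in l, x z - y z = -(x z * y z)) (hg : g =O[l] fun _ => (1 : ℝ))
    (ha : a =o[l] fun _ => (1 : ℝ)) (hx : x =o[l] fun _ => (1 : ℝ)) (hy : y =o[l] a)
    (hu : (fun z => u z - g z * a z) =o[l] a)
    (hD : (fun z => u z - w z + p * g z * (a z * x z)) =o[l] fun z => a z * x z) :
    (fun z => (σ * u z + A * x z) * (1 + (σ * w z + A * y z)) - ((σ * w z + A * y z) + u z ^ 2)
      - σ * (2 * A - p) * g z * (a z * x z)) =o[l] fun z => a z * x z := by
  have hga : (fun z => g z * a z) =o[l] fun _ => (1 : ℝ) := by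
    simpa only [mul_one] using hg.mul_isLittleO ha
  have hu_small : u =o[l] fun _ => (1 : ℝ) :=
    ((hu.trans ha).add hga).congr_left fun z => sub_add_cancel _ _
  have hpga : (fun z => p * g z * (a z * x z)) =O[l] fun z => a z * x z := by
    simpa only [one_mul] using (hg.const_mul_left p).mul (isBigO_refl (fun z => a z * x z) l)
  have hD_big : (fun z => u z - w z) =O[l] fun z => a z * x z :=
    (hD.isBigO.sub hpga).congr_left fun z => add_sub_cancel_right _ _
  have hX : (fun z => σ * A * u z + (A ^ 2 - A)) =O[l] fun _ => (1 : ℝ) :=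
    (hu_small.isBigO.const_mul_left (σ * A)).add (isBigO_const_one _ _ _)
  have hT1 := hD.const_mul_left σ
  have hT2 := hu_small.mul_isBigO hD_big
  have hT3 := (hu.mul_isBigO (isBigO_refl x l)).const_mul_left (2 * σ * A)
  have hT4 := (hD_big.mul_isLittleO hx).const_mul_left (σ * A)
  have hT5 := (hX.mul_isLittleO hy).mul_isBigO (isBigO_refl x l)
  simp only [one_mul, mul_one] at hT2 hT4 hT5
  refine ((((hT1.sub hT2).add hT3).sub hT4).add hT5).congr' ?_ EventuallyEq.rfl
  filter_upwards [hxy] with z hz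
  linear_combination (σ * A * u z - A) * hz - u z * w z * hσ

theorem eventually_nonpos_of_isLittleO {F K h : α → ℝ} {δ : ℝ} (hδ : 0 < δ)
    (hK : ∀ᶠ z in l, K z ≤ -δ) (hh : ∀ᶠ z in l, 0 ≤ h z)
    (hF : (fun z => F z - K z * h z) =o[l] h) : ∀ᶠ z in l, F z ≤ 0 := by
  filter_upwards [hF.def hδ, hK, hh] with z hz hKz hhz
  rw [Real.norm_eq_abs, Real.norm_eq_abs, abs_of_nonneg hhz] at hz
  nlinarith [le_abs_self (F z - K z * h z)]

end Defect

section Expansion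

variable {I : Set ℝ} {p : ℝ} {M : ℕ} {ψ : ℕ → ℝ → ℝ} {s : ℕ → ℝ} {φ : ℕ → ℝ → ℝ}

theorem isLittleO_sub_leading_term (hs0 : s 0 = p) (hs : ∀ k, 1 ≤ k → k ≤ M → p < s k)
    (hψ : ∀ k ≤ M, ∃ C, ∀ t ∈ I, |ψ k t| ≤ C)
    (hφ : LittleOI I
      (fun n t => φ n t - ∑ k ∈ Finset.range (M + 1), ψ k t * (n : ℝ) ^ (-(s k)))
      (fun n => (n : ℝ) ^ (-p - 1))) :
    (fun x : ℕ × ℝ => φ x.1 x.2 - ψ 0 x.2 * (x.1 : ℝ) ^ (-p)) =o[atTop ×ˢ 𝓟 I]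
      fun x => (x.1 : ℝ) ^ (-p) := by
  have hrem := hφ.isLittleO.trans
    ((isLittleO_natCast_rpow_of_lt (a := -p) (by linarith)).comp_tendsto tendsto_fst)
  have htail : (fun x : ℕ × ℝ => ∑ k ∈ Finset.range M, ψ (k + 1) x.2 * (x.1 : ℝ) ^ (-s (k + 1)))
      =o[atTop ×ˢ 𝓟 I] fun x => (x.1 : ℝ) ^ (-p) := by
    refine IsLittleO.fun_sum fun k hk => ?_
    have hk := Finset.mem_range.1 hk
    exact (isLittleO_natCast_rpow_of_lt
      (by linarith [hs (k + 1) (by omega) (by omega)])).bounded_on_mul (hψ (k + 1) (by omega))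
  refine (hrem.add htail).congr_left fun x => ?_
  simp only [Finset.sum_range_succ', hs0]
  ring

theorem isLittleO_sub_pred_add_leading_term (hs0 : s 0 = p) (hs : ∀ k, 1 ≤ k → k ≤ M → p < s k)
    (hψ : ∀ k ≤ M, ∃ C, ∀ t ∈ I, |ψ k t| ≤ C)
    (hφ : LittleOI I
      (fun n t => φ n t - ∑ k ∈ Finset.range (M + 1), ψ k t * (n : ℝ) ^ (-(s k)))
      (fun n => (n : ℝ) ^ (-p - 1))) :
    (fun x : ℕ × ℝ => φ x.1 x.2 - φ (x.1 - 1) x.2 + p * ψ 0 x.2 * ((x.1 : ℝ) ^ (-p) * (x.1 : ℝ)⁻¹))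
      =o[atTop ×ˢ 𝓟 I] fun x => (x.1 : ℝ) ^ (-p) * (x.1 : ℝ)⁻¹ := by
  have hscale : (fun n : ℕ => (n : ℝ) ^ (-p - 1)) =O[atTop]
      fun n => (n : ℝ) ^ (-p) * (n : ℝ)⁻¹ := by
    refine EventuallyEq.isBigO ?_
    filter_upwards [eventually_ne_atTop 0] with n hn
    rw [Real.rpow_sub_one (Nat.cast_ne_zero.2 hn), div_eq_mul_inv]
  have hscale_pred : (fun n : ℕ => ((n - 1 : ℕ) : ℝ) ^ (-p - 1)) =O[atTop]
      fun n => (n : ℝ) ^ (-p - 1) := by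
    have := isBigO_natCast_pred_rpow (p + 1)
    rw [neg_add'] at this
    refine this.congr' ?_ EventuallyEq.rfl
    filter_upwards [eventually_ge_atTop 1] with n hn
    rw [Nat.cast_sub hn, Nat.cast_one]
  have hshift : Tendsto (fun x : ℕ × ℝ => (x.1 - 1, x.2)) (atTop ×ˢ 𝓟 I) (atTop ×ˢ 𝓟 I) :=
    ((tendsto_sub_atTop_nat 1).comp tendsto_fst).prodMk tendsto_snd
  have hrem := hφ.isLittleO.trans_isBigO (hscale.comp_tendsto tendsto_fst)
  have hrem_pred := (hφ.isLittleO.comp_tendsto hshift).trans_isBigO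
    ((hscale_pred.trans hscale).comp_tendsto tendsto_fst)
  have hlead := (isLittleO_natCast_rpow_sub_rpow_pred p).bounded_on_mul (hψ 0 (Nat.zero_le M))
  have htail : (fun x : ℕ × ℝ => ∑ k ∈ Finset.range M,
      ψ (k + 1) x.2 * ((x.1 : ℝ) ^ (-s (k + 1)) - ((x.1 : ℝ) - 1) ^ (-s (k + 1))))
      =o[atTop ×ˢ 𝓟 I] fun x => (x.1 : ℝ) ^ (-p) * (x.1 : ℝ)⁻¹ := by
    refine IsLittleO.fun_sum fun k hk => ?_
    have hk := Finset.mem_range.1 hk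
    have hlt : -s (k + 1) < -p := by linarith [hs (k + 1) (by omega) (by omega)]
    exact ((isBigO_natCast_rpow_sub_rpow_pred _).trans_isLittleO
      ((isLittleO_natCast_rpow_of_lt hlt).mul_isBigO (isBigO_refl _ _))).bounded_on_mul
        (hψ (k + 1) (by omega))
  refine (((hrem.sub hrem_pred).add hlead).add htail).congr' ?_ (.of_forall fun _ => rfl)
  filter_upwards [(eventually_ge_atTop 1).prod_inl _] with x hx
  simp only [Function.comp, Nat.cast_sub hx, Nat.cast_one, Finset.sum_range_succ', hs0, mul_sub,
    Finset.sum_sub_distrib]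
  ring

theorem eventually_minorant_inequality (hp0 : 0 < p) (hp1 : p < 1) (hs0 : s 0 = p)
    (hs : ∀ k, 1 ≤ k → k ≤ M → p < s k) (hψ0 : ∃ c > (0 : ℝ), ∀ t ∈ I, c ≤ ψ 0 t)
    (hψ : ∀ k ≤ M, ∃ C, ∀ t ∈ I, |ψ k t| ≤ C)
    (hφ : LittleOI I
      (fun n t => φ n t - ∑ k ∈ Finset.range (M + 1), ψ k t * (n : ℝ) ^ (-(s k)))
      (fun n => (n : ℝ) ^ (-p - 1)))
    {σ A : ℝ} (hσ : σ ^ 2 = 1) (hσA : σ * (2 * A - p) < 0) :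
    ∀ᶠ x in atTop ×ˢ 𝓟 I,
      (σ * φ x.1 x.2 + A * (x.1 : ℝ)⁻¹) * (1 + (σ * φ (x.1 - 1) x.2 + A * ((x.1 : ℝ) - 1)⁻¹)) ≤
        (σ * φ (x.1 - 1) x.2 + A * ((x.1 : ℝ) - 1)⁻¹) + φ x.1 x.2 ^ 2 := by
  obtain ⟨c, hc, hcψ⟩ := hψ0
  have hinv : (fun n : ℕ => (n : ℝ)⁻¹) =o[atTop] fun _ => (1 : ℝ) :=
    (isLittleO_one_iff ℝ).2 tendsto_inv_atTop_nhds_zero_nat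
  have ha : (fun n : ℕ => (n : ℝ) ^ (-p)) =o[atTop] fun _ => (1 : ℝ) := by
    simpa using isLittleO_natCast_rpow_of_lt (a := 0) (b := -p) (by linarith)
  have hy : (fun n : ℕ => ((n : ℝ) - 1)⁻¹) =o[atTop] fun n => (n : ℝ) ^ (-p) := by
    simpa [Real.rpow_neg_one] using (isBigO_natCast_pred_rpow 1).trans_isLittleO
      (isLittleO_natCast_rpow_of_lt (by linarith : -1 < -p))
  have hxy : ∀ᶠ z : ℕ × ℝ in atTop ×ˢ 𝓟 I,
      (z.1 : ℝ)⁻¹ - ((z.1 : ℝ) - 1)⁻¹ = -((z.1 : ℝ)⁻¹ * ((z.1 : ℝ) - 1)⁻¹) := by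
    filter_upwards [(eventually_ge_atTop 2).prod_inl _] with z hz
    have h₀ : (z.1 : ℝ) ≠ 0 := by positivity
    have h₁ : (z.1 : ℝ) - 1 ≠ 0 := by
      have : (2 : ℝ) ≤ z.1 := by exact_mod_cast hz
      linarith
    field_simp
    ring
  have hdefect := isLittleO_minorant_defect (A := A) hσ hxy
    (isBigO_one_of_bounded_on (hψ 0 (Nat.zero_le M))) (ha.comp_fst _) (hinv.comp_fst _)
    (hy.comp_fst _)
    (isLittleO_sub_leading_term hs0 hs hψ hφ) (isLittleO_sub_pred_add_leading_term hs0 hs hψ hφ)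
  have hK : ∀ᶠ z : ℕ × ℝ in atTop ×ˢ 𝓟 I,
      σ * (2 * A - p) * ψ 0 z.2 ≤ -(-(σ * (2 * A - p)) * c) := by
    rw [eventually_prod_principal_iff]
    exact .of_forall fun _ t ht => by nlinarith [hcψ t ht]
  have hh : ∀ᶠ z : ℕ × ℝ in atTop ×ˢ 𝓟 I, 0 ≤ (z.1 : ℝ) ^ (-p) * (z.1 : ℝ)⁻¹ :=
    .of_forall fun z => by positivity
  filter_upwards [eventually_nonpos_of_isLittleO (mul_pos (neg_pos.2 hσA) hc) hK hh hdefect]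
    with z hz
  linarith

end Expansion

/-- Construction of uniform minorant sequences `v_n^± = ±φ_n + A^± n^{-1}`:
they satisfy `v_n^±(1 + v_{n-1}^±) ≤ v_{n-1}^± + φ_n²` for all `n > N`, uniformly on `I`. -/
theorem uniform_minorant_sequences (I : Set ℝ) (p : ℝ) (hp0 : 0 < p) (hp1 : p < 1)
    (M : ℕ) (ψ : ℕ → ℝ → ℝ) (s : ℕ → ℝ) (φ : ℕ → ℝ → ℝ)
    (hs0 : s 0 = p)
    (hs : ∀ k, 1 ≤ k → k ≤ M → p < s k ∧ s k ≤ p + 1)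
    (hψ0pos : ∃ c > (0 : ℝ), ∀ t ∈ I, c ≤ ψ 0 t)
    (hψbdd : ∀ k ≤ M, ∃ C : ℝ, ∀ t ∈ I, |ψ k t| ≤ C)
    (hφ : LittleOI I
      (fun n t => φ n t - ∑ k ∈ Finset.range (M + 1), ψ k t * (n : ℝ) ^ (-(s k)))
      (fun n => (n : ℝ) ^ (-p - 1)))
    (Ap Am : ℝ) (hAp : Ap < p / 2) (hAm : p / 2 < Am) :
    ∃ N : ℕ, ∀ n > N, ∀ t ∈ I,
      (φ n t + Ap * (n : ℝ)⁻¹) * (1 + (φ (n - 1) t + Ap * ((n : ℝ) - 1)⁻¹)) ≤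
        (φ (n - 1) t + Ap * ((n : ℝ) - 1)⁻¹) + (φ n t) ^ 2 ∧
      (-φ n t + Am * (n : ℝ)⁻¹) * (1 + (-φ (n - 1) t + Am * ((n : ℝ) - 1)⁻¹)) ≤
        (-φ (n - 1) t + Am * ((n : ℝ) - 1)⁻¹) + (φ n t) ^ 2 := by
  have hs' : ∀ k, 1 ≤ k → k ≤ M → p < s k := fun k h₁ h₂ => (hs k h₁ h₂).1
  have hplus := eventually_minorant_inequality hp0 hp1 hs0 hs' hψ0pos hψbdd hφ
    (σ := 1) (A := Ap) (by norm_num) (by linarith)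
  have hminus := eventually_minorant_inequality hp0 hp1 hs0 hs' hψ0pos hψbdd hφ
    (σ := -1) (A := Am) (by norm_num) (by linarith)
  obtain ⟨N, hN⟩ := eventually_atTop_prod_principal_iff.1 (hplus.and hminus)
  exact ⟨N, fun n hn t ht => by simpa only [one_mul, neg_one_mul] using hN n hn t ht⟩
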